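/- arXiv:2105.11898 — 2 statements merged into one kernel-verified Lean document; each statement's English description precedes it below -/
import Mathlib

section
/- Let k ∈ ℕ and let w be a binary word of length 2k with no factor 11. Then 0 ≤ val_F(0w) < F_{2k+1}. -/
/-- Fibonacci sequence with `F 0 = 1`, `F 1 = 1`, `F 2 = 2`. -/
def F : ℕ → ℤ
  | 0 => 1
  | 1 => 1
  | (n+2) => F (n+1) + F n

/-- Numerical value of a binary digit. -/
def bv (x : Bool) : ℤ := if x then 1 else 0

/-- Value of an odd-length binary word `w = w_{2k+1} ⋯ w_1` (most significant
digit first): `val_F(w) = Σ_{i=1}^{2k} w_i F_i − w_{2k+1} F_{2k}`. -/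
def valF (w : List Bool) : ℤ :=
  (∑ i ∈ Finset.range (w.length - 1), bv (w.reverse.getD i false) * F (i+1))
    - bv (w.reverse.getD (w.length - 1) false) * F (w.length - 1)

/-- The word has no factor `11`. -/
def no11 (w : List Bool) : Prop :=
  List.Chain' (fun x y => ¬(x = true ∧ y = true)) w

/-- Words of the canonical representation language: odd length, no factor 11,
not beginning with 000 nor with 101. -/
def IsRep (w : List Bool) : Prop :=
  Odd w.length ∧ no11 w ∧
    ¬ ([false, false, false] <+: w) ∧ ¬ ([true, false, true] <+: w)

/-- `Ik k = {i ∈ ℤ : −F_{2k} ≤ i < F_{2k+1}}`. -/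
def Ik (k : ℕ) : Set ℤ := {i : ℤ | -F (2*k) ≤ i ∧ i < F (2*k+1)}

/-- Shifted version of `Ik` incorporating `I_{−1} = ∅`. -/
def Iext : ℕ → Set ℤ
  | 0 => ∅
  | (k+1) => Ik k

/-- The morphism `h : 0 ↦ 00, 1 ↦ 01, 2 ↦ 10` on single letters. -/
def h3 : Fin 3 → List Bool
  | 0 => [false, false]
  | 1 => [false, true]
  | 2 => [true, false]

lemma F_pos : ∀ n, 0 < F n
  | 0 => one_pos
  | 1 => one_pos
  | (n+2) => by have := F_pos (n+1); have := F_pos n; simp [F]; omega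

lemma F_mono (n : ℕ) : F n ≤ F (n+1) := by
  cases n with
  | zero => simp [F]
  | succ m => have := F_pos m; simp [F]; omega

lemma bv_nonneg (x : Bool) : 0 ≤ bv x := by cases x <;> simp [bv]

lemma bv_le_one (x : Bool) : bv x ≤ 1 := by cases x <;> simp [bv]

def S (w : List Bool) : ℤ :=
  ∑ i ∈ Finset.range w.length, bv (w.reverse.getD i false) * F (i+1)

lemma S_cons (a : Bool) (t : List Bool) :
    S (a :: t) = bv a * F (t.length + 1) + S t := by
  simp only [S, List.reverse_cons, List.length_cons, Finset.sum_range_succ]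
  have h2 : (t.reverse ++ [a]).getD t.length false = a := by
    rw [List.getD_append_right]
    · simp
    · simp
  rw [h2]
  have h1 : ∀ i ∈ Finset.range t.length,
      bv ((t.reverse ++ [a]).getD i false) * F (i+1)
        = bv (t.reverse.getD i false) * F (i+1) := by
    intro i hi
    rw [List.getD_append]
    simpa using Finset.mem_range.mp hi
  rw [Finset.sum_congr rfl h1]
  ring

lemma S_nonneg (w : List Bool) : 0 ≤ S w := by
  apply Finset.sum_nonneg
  intro i _
  exact mul_nonneg (bv_nonneg _) (F_pos _).le

lemma S_bound : ∀ w : List Bool, no11 w → S w ≤ F (w.length + 1) - 1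
  | [] => by intro _; simp [S, F]
  | [a] => by
      intro _
      have := bv_le_one a
      simp [S_cons, S, F]
      cases a <;> simp [bv]
  | a :: b :: t => by
      intro h
      have hab : ¬(a = true ∧ b = true) := (List.isChain_cons_cons.mp h).1
      have hbt : no11 (b :: t) := (List.isChain_cons_cons.mp h).2
      have ht : no11 t := hbt.tail
      cases a with
      | false =>
          have hrec := S_bound (b :: t) hbt
          have hm := F_mono (t.length + 2)
          rw [S_cons]
          simp only [bv, if_neg Bool.false_ne_true, zero_mul, zero_add,
            List.length_cons, show t.length + 1 + 1 = t.length + 2 from rfl,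
            show t.length + 2 + 1 = t.length + 3 from rfl] at *
          omega
      | true =>
          have hb : b = false := by
            cases b
            · rfl
            · exact absurd ⟨rfl, rfl⟩ hab
          subst hb
          have := S_bound t ht
          rw [S_cons, S_cons]
          simp only [bv, if_pos, if_neg Bool.false_ne_true, one_mul,
            zero_mul, zero_add, List.length_cons,
            show t.length + 1 + 1 = t.length + 2 from rfl,
            show t.length + 2 + 1 = t.length + 3 from rfl] at *
          have hF : F (t.length + 3) = F (t.length + 2) + F (t.length + 1) := by
            simp [F]
          omega

lemma valF_false (w : List Bool) : valF (false :: w) = S w := by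
  simp only [valF, S, List.length_cons, Nat.add_sub_cancel, List.reverse_cons]
  have h2 : (w.reverse ++ [false]).getD w.length false = false := by
    rw [List.getD_append_right] <;> simp
  rw [h2]
  have h1 : ∀ i ∈ Finset.range w.length,
      bv ((w.reverse ++ [false]).getD i false) * F (i+1)
        = bv (w.reverse.getD i false) * F (i+1) := by
    intro i hi
    rw [List.getD_append]
    simpa using Finset.mem_range.mp hi
  rw [Finset.sum_congr rfl h1]
  simp [bv]

/-- `0 ≤ val_F(0w) < F_{2k+1}` for `w` of even length `2k` with no factor 11. -/
theorem valF_zero_nonneg (k : ℕ) (w : List Bool)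
    (hlen : w.length = 2*k) (h11 : no11 w) :
    0 ≤ valF (false :: w) ∧ valF (false :: w) < F (2*k+1) := by
  rw [valF_false]
  have h1 := S_nonneg w
  have h2 := S_bound w h11
  rw [hlen] at h2
  exact ⟨h1, by omega⟩
end

section
/- Let φ be the morphism a ↦ ab, b ↦ a and x: ℤ → {a,b} the bi-infinite fixed point of φ² with seed b.a. Let A be the DFAO with states {START, a, b}, input alphabet {0,1}, initial state START, transitions START →0 a, START →1 b, a →0 a, a →1 b, b →0 a, and output the final state reached. Then for all n ∈ ℤ, x_n = A(rep_F(n)), where the automaton reads rep_F(n) from the most significant digit. -/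
/-- The Fibonacci morphism `φ : a ↦ ab, b ↦ a` applied to a letter,
where `a` is encoded by `false` and `b` by `true`. -/
def phiL (c : Bool) : List Bool := if c then [false] else [false, true]

/-- The Fibonacci morphism `φ` on words. -/
def phi (w : List Bool) : List Bool := w.flatMap phiL

/-- `φ²` applied to a letter: `φ²(a) = aba`, `φ²(b) = ab`. -/
def phi2L (c : Bool) : List Bool := phi (phiL c)

/-- Transition function of the DFAO with states `{START, a, b}` where
`START = none`, `a = some false`, `b = some true`:
`START →0 a`, `START →1 b`, `a →0 a`, `a →1 b`, `b →0 a`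
(the unused transition from `b` on input `1` is set to `b`). -/
def step : Option Bool → Bool → Option Bool
  | none, c => some c
  | some false, c => some c
  | some true, false => some false
  | some true, true => some true

/-! The automaton always sits in the state named by the last digit read, so the claim is that
`x_n = b` exactly when the least significant digit of `rep_F(n)` is `1`. On `Ik k` the word `x`
is `W_k = φ^{2k}(b).φ^{2k}(a)`, and `W_{k+1} = φ²(W_k)`. Read least significant digit first,
`rep_F(n)` locates position `n + F_{2k}` of `W_k` recursively: the top digit picks the letter of
`W_0 = b.a`, and each lower pair of digits `d c` picks offset `d + 2c` inside the block
`φ²(e) ∈ {aba, ab}` of the letter `e` located so far; the letter at that offset is `d`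
(offset `2` needs `c = 1`, hence `e = a` since `11` is forbidden). Lengths of `φ^m`-images are
Fibonacci numbers, which turns the located position into `val_F`. -/

open Function

lemma step_eq_some (q : Option Bool) (c : Bool) : step q c = some c := by
  rcases q with _ | _ | _ <;> cases c <;> rfl

lemma foldl_step_eq_getLast? (w : List Bool) (q : Option Bool) :
    w.foldl step q = w.getLast?.or q := by
  induction w generalizing q with
  | nil => rfl
  | cons c w ih =>
    rw [List.foldl_cons, step_eq_some, ih]
    cases w <;> simp [List.getLast?_eq_some_getLast]

lemma no11_reverse {w : List Bool} : no11 w.reverse ↔ no11 w :=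
  List.isChain_reverse.trans (by simp only [and_comm]; rfl)

lemma phi_iter_append (m : ℕ) (u v : List Bool) :
    phi^[m] (u ++ v) = phi^[m] u ++ phi^[m] v := by
  induction m generalizing u v with
  | zero => rfl
  | succ m ih => simp only [iterate_succ_apply, phi, List.flatMap_append, ih]

lemma phi_iter_nil (m : ℕ) : phi^[m] [] = [] := by
  induction m with
  | zero => rfl
  | succ m ih => rwa [iterate_succ_apply]

lemma List.IsPrefix.phi_iter {u v : List Bool} (h : u <+: v) (m : ℕ) :
    phi^[m] u <+: phi^[m] v := by
  obtain ⟨t, rfl⟩ := h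
  exact ⟨phi^[m] t, (phi_iter_append m u t).symm⟩

lemma length_phi_iter_singleton (m : ℕ) :
    ((phi^[m] [false]).length : ℤ) = F (m + 1) ∧ ((phi^[m] [true]).length : ℤ) = F m := by
  induction m with
  | zero => exact ⟨rfl, rfl⟩
  | succ m ih =>
    rw [iterate_succ_apply, iterate_succ_apply, show phi [false] = [false] ++ [true] from rfl,
      phi_iter_append, List.length_append, Nat.cast_add, ih.1, ih.2]
    exact ⟨rfl, ih.1⟩

/-- `x` on the interval `Ik k`, i.e. `φ^{2k}(b).φ^{2k}(a)`, read from position `-F_{2k}`. -/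
def fibWindow (k : ℕ) : List Bool := phi^[2 * k] [true] ++ phi^[2 * k] [false]

lemma fibWindow_succ (k : ℕ) : fibWindow (k + 1) = phi^[2] (fibWindow k) := by
  rw [fibWindow, fibWindow, phi_iter_append, ← iterate_add_apply, ← iterate_add_apply,
    Nat.add_comm 2]
  rfl

lemma length_fibWindow (k : ℕ) : ((fibWindow k).length : ℤ) = F (2 * k) + F (2 * k + 1) := by
  rw [fibWindow, List.length_append, Nat.cast_add, (length_phi_iter_singleton _).1,
    (length_phi_iter_singleton _).2]

/-- The prefix of `φ²(e)` in front of the letter at offset `d + 2c` selected by the two lowest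
digits `d`, `c`. -/
def lowDigitsWord (d c : Bool) : List Bool :=
  (if c then [false, true] else []) ++ (if d then [false] else [])

lemma lowDigitsWord_append_isPrefix {d c e : Bool} (hdc : ¬(d = true ∧ c = true))
    (hce : ¬(c = true ∧ e = true)) : lowDigitsWord d c ++ [d] <+: phi^[2] [e] := by
  revert d c e
  decide

lemma length_phi_iter_lowDigitsWord (m : ℕ) (d c : Bool) :
    ((phi^[m] (lowDigitsWord d c)).length : ℤ) = bv d * F (m + 1) + bv c * F (m + 2) := by
  obtain ⟨ha, hb⟩ := length_phi_iter_singleton m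
  have hab : ((phi^[m] [false, true]).length : ℤ) = F (m + 2) := by
    rw [show [false, true] = [false] ++ [true] from rfl, phi_iter_append, List.length_append,
      Nat.cast_add, ha, hb]
    rfl
  cases d <;> cases c <;>
    simp only [lowDigitsWord, phi_iter_append, phi_iter_nil, List.length_append, Nat.cast_add,
      ha, hab, bv, if_true, Bool.false_eq_true, if_false, List.append_nil, List.length_nil] <;>
    ring

/-- For a digit word `r` of length `2k+1`, read least significant digit first, the prefix of
`fibWindow k` of length `val_F(r.reverse) + F_{2k}`. -/
def fibPrefix : List Bool → List Bool
  | [] => []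
  | [t] => if t then [] else [true]
  | d :: c :: r => phi^[2] (fibPrefix r) ++ lowDigitsWord d c

lemma fibPrefix_append_isPrefix_fibWindow (k : ℕ) (e : Bool) (r : List Bool)
    (hlen : r.length = 2 * k) (h11 : no11 (e :: r)) :
    fibPrefix (e :: r) ++ [e] <+: fibWindow k := by
  induction k generalizing e r with
  | zero =>
    obtain rfl : r = [] := List.length_eq_zero_iff.mp hlen
    cases e <;> decide
  | succ k ih =>
    obtain ⟨c, e', r', rfl⟩ : ∃ c e' r', r = c :: e' :: r' := by
      match r, hlen with
      | c :: e' :: r', _ => exact ⟨c, e', r', rfl⟩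
    obtain ⟨hec, h11'⟩ := List.isChain_cons_cons.mp h11
    obtain ⟨hce', h11''⟩ := List.isChain_cons_cons.mp h11'
    have hprev := (ih e' r' (by simpa [Nat.mul_succ] using hlen) h11'').phi_iter 2
    rw [phi_iter_append, ← fibWindow_succ] at hprev
    rw [fibPrefix, List.append_assoc]
    exact ((List.prefix_append_right_inj _).mpr (lowDigitsWord_append_isPrefix hec hce')).trans
      hprev

/-- `val_F(r.reverse) + F_{|r|-1}` with every Fibonacci index raised by `m`; the top digit enters
complemented because `val_F` gives it weight `-F_{2k}`. -/
def shiftedValue (m : ℕ) (r : List Bool) : ℤ :=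
  (∑ i ∈ Finset.range (r.length - 1), bv (r.getD i false) * F (i + 1 + m))
    + (1 - bv (r.getD (r.length - 1) false)) * F (r.length - 1 + m)

lemma valF_eq_shiftedValue (w : List Bool) :
    valF w = shiftedValue 0 w.reverse - F (w.length - 1) := by
  simp only [valF, shiftedValue, List.length_reverse, Nat.add_zero]
  ring

lemma shiftedValue_singleton (m : ℕ) (t : Bool) : shiftedValue m [t] = (1 - bv t) * F m := by
  simp [shiftedValue]

lemma shiftedValue_cons_cons (m : ℕ) (d c : Bool) {r : List Bool} (hr : r ≠ []) :
    shiftedValue m (d :: c :: r)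
      = bv d * F (m + 1) + bv c * F (m + 2) + shiftedValue (m + 2) r := by
  obtain ⟨n, hn⟩ : ∃ n, r.length = n + 1 := Nat.exists_eq_succ_of_ne_zero (by simpa using hr)
  simp only [shiftedValue, List.length_cons, hn, Nat.add_sub_cancel, Finset.sum_range_succ',
    List.getD_cons_succ, List.getD_cons_zero]
  have hsum : ∑ i ∈ Finset.range n, bv (r.getD i false) * F (i + 1 + 1 + 1 + m)
      = ∑ i ∈ Finset.range n, bv (r.getD i false) * F (i + 1 + (m + 2)) :=
    Finset.sum_congr rfl fun i _ => by congr 2; omega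
  rw [hsum, show n + 1 + 1 + m = n + (m + 2) by omega, show 0 + 1 + 1 + m = m + 2 by omega,
    show 0 + 1 + m = m + 1 by omega]
  ring

lemma length_phi_iter_fibPrefix (m : ℕ) (r : List Bool) (hr : Odd r.length) :
    ((phi^[m] (fibPrefix r)).length : ℤ) = shiftedValue m r := by
  induction r using fibPrefix.induct generalizing m with
  | case1 => simp at hr
  | case2 => simp [fibPrefix, shiftedValue_singleton, phi_iter_nil, bv]
  | case3 t ht =>
    obtain rfl : t = false := by simpa using ht
    simp [fibPrefix, shiftedValue_singleton, (length_phi_iter_singleton m).2, bv]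
  | case4 d c r ih =>
    have hr' : Odd r.length := by simpa [Nat.odd_add_one] using hr
    rw [fibPrefix, phi_iter_append, ← iterate_add_apply, List.length_append, Nat.cast_add,
      ih _ hr', length_phi_iter_lowDigitsWord,
      shiftedValue_cons_cons _ _ _ (List.ne_nil_of_length_pos hr'.pos)]
    ring

lemma List.IsPrefix.getD_length {α : Type*} {u v : List α} {e : α} (h : u ++ [e] <+: v)
    (d : α) : v.getD u.length d = e := by
  obtain ⟨t, rfl⟩ := h
  simp

lemma eq_getD_fibWindow (x : ℤ → Bool) (k : ℕ)
    (hxpos : ∀ n : ℤ, 0 ≤ n → n < (phi^[2 * k] [false]).length →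
      x n = (phi^[2 * k] [false]).getD n.toNat false)
    (hxneg : ∀ n : ℤ, -((phi^[2 * k] [true]).length : ℤ) ≤ n → n < 0 →
      x n = (phi^[2 * k] [true]).getD (((phi^[2 * k] [true]).length : ℤ) + n).toNat false)
    {n : ℤ} (hn : n ∈ Ik k) : x n = (fibWindow k).getD (n + F (2 * k)).toNat false := by
  obtain ⟨hlo, hhi⟩ := hn
  obtain ⟨ha, hb⟩ := length_phi_iter_singleton (2 * k)
  rw [fibWindow]
  rcases le_or_gt 0 n with hn0 | hn0
  · rw [hxpos n hn0 (by omega), List.getD_append_right _ _ _ _ (by omega)]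
    congr 1
    omega
  · rw [hxneg n (by omega) hn0, List.getD_append _ _ _ _ (by omega)]
    congr 1
    omega

/-- The bi-infinite Fibonacci word `x = lim φ^{2k}(b.a)` is generated by the
DFAO reading the canonical Fibonacci representation: `x_n = A(rep_F(n))`
for all `n ∈ ℤ`. -/
theorem dfao_computes_fixed_point
    (repF : ℤ → List Bool)
    (hrep : ∀ n : ℤ, IsRep (repF n) ∧ valF (repF n) = n)
    (x : ℤ → Bool)
    (hxpos : ∀ k : ℕ, ∀ n : ℤ, 0 ≤ n → n < ((phi^[2*k]) [false]).length →
      x n = ((phi^[2*k]) [false]).getD n.toNat false)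
    (hxneg : ∀ k : ℕ, ∀ n : ℤ, -(((phi^[2*k]) [true]).length : ℤ) ≤ n → n < 0 →
      x n = ((phi^[2*k]) [true]).getD
              ((((phi^[2*k]) [true]).length : ℤ) + n).toNat false) :
    ∀ n : ℤ, (repF n).foldl step none = some (x n) := by
  intro n
  obtain ⟨⟨⟨k, hk⟩, h11, -, -⟩, hval⟩ := hrep n
  obtain ⟨e, r, hr⟩ : ∃ e r, (repF n).reverse = e :: r :=
    List.exists_cons_of_ne_nil (by simp [← List.length_pos_iff, hk])
  have hrlen : r.length = 2 * k := by simpa [hk] using (congrArg List.length hr).symm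
  have hpre := fibPrefix_append_isPrefix_fibWindow k e r hrlen (hr ▸ no11_reverse.mpr h11)
  have hlen : ((fibPrefix (e :: r)).length : ℤ) = n + F (2 * k) := by
    rw [← hval, valF_eq_shiftedValue, hr, ← length_phi_iter_fibPrefix 0 _ (by simp [hrlen]), hk]
    simp
  have hwin : n ∈ Ik k := by
    have hfit := hpre.length_le
    simp only [List.length_append, List.length_singleton] at hfit
    have hwlen := length_fibWindow k
    constructor <;> omega
  rw [foldl_step_eq_getLast?, ← List.head?_reverse, hr,
    eq_getD_fibWindow x k (hxpos k) (hxneg k) hwin, ← hlen, Int.toNat_natCast, hpre.getD_length]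
  rfl
end
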